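/- (Correctness of the full cooperative repair scheme) Assume h ≥ 2. Let i_1, …, i_h ∈ {0, …, n−1} be distinct failed-node indices and R ⊆ {0, …, n−1} \ {i_1, …, i_h} a helper set with |R| = d. Suppose two codewords c, c' ∈ C satisfy, for every j ∈ {1, …, h}: c_{u,d−k+j,a} = c'_{u,d−k+j,a} for all u ∈ R, a ∈ V_{i_j}, and c_{u,b,a} + c_{u,d−k+j,a(i_j,b)} = c'_{u,b,a} + c'_{u,d−k+j,a(i_j,b)} for all u ∈ R, b ∈ {1, …, d−k}, a ∈ V_{i_j}. Then c_{i_j,b,a} = c'_{i_j,b,a} for every j ∈ {1, …, h}, every b ∈ {1, …, d−k+h}, and every a ∈ {0, …, s−1}^n; that is, the downloaded data determine the entire contents of all h failed nodes. -/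

import Mathlib

/-!
Replace the two codewords by their difference `E`, which lies in `C` and vanishes on all
downloaded data. The core fact concerns a single layer `x` (a function of node and index) whose
parity checks hold on `V_{i₀}` and which vanishes at the `d` helpers on `V_{i₀}`: restricted to
`V_{i₀}`, the parity checks become Vandermonde systems in the `(n - d) + (s - 1) = r` values of `x`
at the other nodes and at the points `a(i₀, e)` of node `i₀`, so `x` vanishes on `V_{i₀}` and
everywhere at node `i₀`. The downloads of node `i_j` are the helper values on `V_{i_j}` of two such
layers: the extra layer `d - k + j` of `E`, and `E_{·,v,a} + E_{·,d-k+j,a(i_j,v)}` for `v ≤ d - k`.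
This clears the extra layer and the data layers of each failed node `i_j`; its value on another
extra layer `d - k + j'` at `a` with `a_{i_{j'}} = v ≠ 0` is then read off the second layer of
node `i_{j'}` at `a(i_{j'}, 0)`.
-/

open Finset

/-- The code `C` of Construction 1: arrays `c = (c_{i,b,a})` with `i ∈ [0,n)`,
`b ∈ {1,…,B}` (here `B = d-k+h`; entries of `c` with `b` outside this range are
irrelevant), and `a ∈ {0,…,s-1}^n`, satisfying the parity-check equations
`∑_i λ_i^t c_{i,b,a} + ∑_i δ(a_i) ∑_{e=1}^{s-1} μ_e^t c_{i,b,a(i,e)} = 0`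
for all `t ∈ [0,r)`, all `b ∈ {1,…,B}`, and all `a`. -/
def codeC {F : Type*} [Field F] (n r s B : ℕ) (lam : Fin n → F) (mu : Fin s → F)
    (c : Fin n → ℕ → (Fin n → Fin s) → F) : Prop :=
  ∀ t < r, ∀ b : ℕ, 1 ≤ b → b ≤ B → ∀ a : Fin n → Fin s,
    ∑ i, lam i ^ t * c i b a
      + ∑ i, (if (a i : ℕ) = 0 then
          ∑ e ∈ univ.filter (fun e : Fin s => (e : ℕ) ≠ 0),
            mu e ^ t * c i b (Function.update a i e)
        else 0) = 0

section Vandermonde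

variable {K ι κ : Type*} [Field K]

theorem eq_zero_of_sum_pow_mul_eq_zero (S : Finset ι) {θ : ι → K} (hθ : Set.InjOn θ S)
    {y : ι → K} (h : ∀ t < #S, ∑ p ∈ S, θ p ^ t * y p = 0) : ∀ p ∈ S, y p = 0 := by
  intro p hp
  let e := S.equivFin
  have hv := Matrix.eq_zero_of_forall_pow_sum_mul_pow_eq_zero
    (f := fun j => θ (e.symm j)) (v := fun j => y (e.symm j))
    (fun j j' hjj' => e.symm.injective (Subtype.ext (hθ (e.symm j).2 (e.symm j').2 hjj')))
    (fun t => by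
      rw [← h t t.isLt, ← sum_coe_sort S, ← e.symm.sum_comp]
      exact sum_congr rfl fun _ _ => mul_comm _ _)
  simpa using congrFun hv (e ⟨p, hp⟩)

theorem eq_zero_of_sum_pow_mul_add_sum_pow_mul_eq_zero {r : ℕ} (S : Finset ι) (T : Finset κ)
    {f : ι → K} {g : κ → K} (hf : Set.InjOn f S) (hg : Set.InjOn g T)
    (hfg : ∀ i ∈ S, ∀ e ∈ T, f i ≠ g e) (hcard : #S + #T ≤ r) {x : ι → K} {y : κ → K}
    (h : ∀ t < r, ∑ i ∈ S, f i ^ t * x i + ∑ e ∈ T, g e ^ t * y e = 0) :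
    (∀ i ∈ S, x i = 0) ∧ ∀ e ∈ T, y e = 0 := by
  have hinj : Set.InjOn (Sum.elim f g) (S.disjSum T) := by
    rintro (i | e) hp (i' | e') hq hpq <;>
      simp only [mem_coe, inl_mem_disjSum, inr_mem_disjSum, Sum.elim_inl, Sum.elim_inr] at hp hq hpq
    exacts [congrArg _ (hf hp hq hpq), (hfg i hp e' hq hpq).elim,
      (hfg i' hq e hp hpq.symm).elim, congrArg _ (hg hp hq hpq)]
  have hzero := eq_zero_of_sum_pow_mul_eq_zero (S.disjSum T) hinj (y := Sum.elim x y)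
    (fun t ht => by
      rw [sum_disjSum]
      exact h t (by rw [card_disjSum] at ht; omega))
  exact ⟨fun i hi => hzero (.inl i) (inl_mem_disjSum.mpr hi),
    fun e he => hzero (.inr e) (inr_mem_disjSum.mpr he)⟩

end Vandermonde

theorem card_filter_val_ne_zero_le (s : ℕ) : #{e : Fin s | (e : ℕ) ≠ 0} ≤ s - 1 := by
  rcases s with _ | s
  · simp
  · calc #{e : Fin (s + 1) | (e : ℕ) ≠ 0} ≤ #(univ.erase (0 : Fin (s + 1))) :=
          card_le_card fun e he => by
            simp only [mem_filter, mem_univ, true_and, mem_erase, and_true] at he ⊢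
            exact fun h => he (by simp [h])
      _ = s + 1 - 1 := by simp

theorem card_filter_update_val_eq_zero_lt {n s : ℕ} {a : Fin n → Fin s} {i : Fin n} {e : Fin s}
    (hai : (a i : ℕ) = 0) (he : (e : ℕ) ≠ 0) :
    #{j | (Function.update a i e j : ℕ) = 0} < #{j | (a j : ℕ) = 0} := by
  refine card_lt_card ⟨fun j hj => ?_, fun hsub => he ?_⟩
  · by_cases hji : j = i
    · subst hji; simp_all
    · simp_all
  · have := hsub (by simpa using hai)
    simpa using this

section ParityCheck

variable {F : Type*} [Field F] {n s : ℕ} (lam : Fin n → F) (mu : Fin s → F)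

def parityCheck (t : ℕ) (x : Fin n → (Fin n → Fin s) → F) (a : Fin n → Fin s) : F :=
  ∑ i, lam i ^ t * x i a
    + ∑ i, (if (a i : ℕ) = 0 then
        ∑ e ∈ univ.filter (fun e : Fin s => (e : ℕ) ≠ 0), mu e ^ t * x i (Function.update a i e)
      else 0)

variable {lam mu}

theorem codeC.parityCheck_eq_zero {r B : ℕ} {c : Fin n → ℕ → (Fin n → Fin s) → F}
    (hc : codeC n r s B lam mu c) {t b : ℕ} (ht : t < r) (hb : 1 ≤ b) (hbB : b ≤ B)
    (a : Fin n → Fin s) : parityCheck lam mu t (fun i => c i b) a = 0 :=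
  hc t ht b hb hbB a

theorem parityCheck_sub (t : ℕ) (x y : Fin n → (Fin n → Fin s) → F) (a : Fin n → Fin s) :
    parityCheck lam mu t (x - y) a = parityCheck lam mu t x a - parityCheck lam mu t y a := by
  simp only [parityCheck, Pi.sub_apply, mul_sub, sum_sub_distrib]
  rw [add_sub_add_comm]
  congr 1
  rw [← sum_sub_distrib]
  refine sum_congr rfl fun i _ => ?_
  split_ifs <;> simp

theorem codeC.sub {r B : ℕ} {c c' : Fin n → ℕ → (Fin n → Fin s) → F}
    (hc : codeC n r s B lam mu c) (hc' : codeC n r s B lam mu c') :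
    codeC n r s B lam mu (c - c') := fun t ht b hb hbB a => by
  have := parityCheck_sub (lam := lam) (mu := mu) t (fun i => c i b) (fun i => c' i b) a
  rw [hc.parityCheck_eq_zero ht hb hbB, hc'.parityCheck_eq_zero ht hb hbB, sub_zero] at this
  exact this

theorem parityCheck_eq_of_val_eq_zero {t : ℕ} {x : Fin n → (Fin n → Fin s) → F}
    {a : Fin n → Fin s} {i₀ : Fin n} (ha : (a i₀ : ℕ) = 0) :
    parityCheck lam mu t x a = ∑ i, lam i ^ t * x i a
      + ∑ e ∈ univ.filter (fun e : Fin s => (e : ℕ) ≠ 0), mu e ^ t * x i₀ (Function.update a i₀ e)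
      + ∑ i ∈ univ.erase i₀, (if (a i : ℕ) = 0 then
          ∑ e ∈ univ.filter (fun e : Fin s => (e : ℕ) ≠ 0), mu e ^ t * x i (Function.update a i e)
        else 0) := by
  rw [parityCheck, add_assoc]
  congr 1
  rw [← add_sum_erase univ _ (mem_univ i₀), if_pos ha]

-- Off `V_{i₀}` it agrees with `x`, which makes its parity checks on `V_{i₀}` the sums of those of
-- `x` and `y`.
def piggyback (x y : Fin n → (Fin n → Fin s) → F) (i₀ : Fin n) (v : Fin s) :
    Fin n → (Fin n → Fin s) → F :=
  fun i a => if (a i₀ : ℕ) = 0 then x i a + y i (Function.update a i₀ v) else x i a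

theorem parityCheck_piggyback (t : ℕ) (x y : Fin n → (Fin n → Fin s) → F) {i₀ : Fin n}
    {v : Fin s} (hv : (v : ℕ) ≠ 0) {a : Fin n → Fin s} (ha : (a i₀ : ℕ) = 0) :
    parityCheck lam mu t (piggyback x y i₀ v) a
      = parityCheck lam mu t x a + parityCheck lam mu t y (Function.update a i₀ v) := by
  have hchecks : ∀ i, (if (a i : ℕ) = 0 then ∑ e ∈ univ.filter (fun e : Fin s => (e : ℕ) ≠ 0),
        mu e ^ t * piggyback x y i₀ v i (Function.update a i e) else 0)
      = (if (a i : ℕ) = 0 then ∑ e ∈ univ.filter (fun e : Fin s => (e : ℕ) ≠ 0),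
          mu e ^ t * x i (Function.update a i e) else 0)
        + (if (Function.update a i₀ v i : ℕ) = 0 then
            ∑ e ∈ univ.filter (fun e : Fin s => (e : ℕ) ≠ 0),
              mu e ^ t * y i (Function.update (Function.update a i₀ v) i e) else 0) := by
    intro i
    by_cases hi : i = i₀
    · subst hi
      rw [if_pos ha, if_pos ha, Function.update_self, if_neg hv, add_zero]
      refine sum_congr rfl fun e he => ?_
      rw [piggyback, Function.update_self, if_neg (mem_filter.1 he).2]
    · rw [Function.update_of_ne hi]
      split_ifs
      · rw [← sum_add_distrib]
        refine sum_congr rfl fun e _ => ?_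
        rw [piggyback, Function.update_of_ne (Ne.symm hi), if_pos ha, mul_add,
          Function.update_comm hi]
      · rw [add_zero]
  rw [parityCheck, parityCheck, parityCheck, sum_congr rfl fun i _ => hchecks i, sum_add_distrib]
  simp only [piggyback, if_pos ha, mul_add, sum_add_distrib]
  ring

theorem eq_zero_of_parityCheck_eq_zero (hlam : Function.Injective lam)
    (hmu : ∀ e e' : Fin s, (e : ℕ) ≠ 0 → (e' : ℕ) ≠ 0 → mu e = mu e' → e = e')
    (hlammu : ∀ (i : Fin n) (e : Fin s), (e : ℕ) ≠ 0 → lam i ≠ mu e)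
    {r : ℕ} {i₀ : Fin n} {R : Finset (Fin n)} (hcard : #Rᶜ + (s - 1) ≤ r)
    {x : Fin n → (Fin n → Fin s) → F}
    (hx : ∀ t < r, ∀ a : Fin n → Fin s, (a i₀ : ℕ) = 0 → parityCheck lam mu t x a = 0)
    (hR : ∀ u ∈ R, ∀ a : Fin n → Fin s, (a i₀ : ℕ) = 0 → x u a = 0) :
    (∀ a : Fin n → Fin s, (a i₀ : ℕ) = 0 → ∀ i, x i a = 0) ∧ ∀ a, x i₀ a = 0 := by
  have hslice : ∀ a : Fin n → Fin s, (a i₀ : ℕ) = 0 →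
      (∀ i, x i a = 0) ∧ ∀ e : Fin s, (e : ℕ) ≠ 0 → x i₀ (Function.update a i₀ e) = 0 := by
    intro a ha
    -- The δ-terms at nodes `i ≠ i₀` only involve points `a(i, e)` of `V_{i₀}` with fewer zeros.
    induction hm : #{j | (a j : ℕ) = 0} using Nat.strong_induction_on generalizing a with
    | _ m ih =>
    have hnext : ∀ i ∈ univ.erase i₀, (a i : ℕ) = 0 → ∀ e : Fin s, (e : ℕ) ≠ 0 →
        x i (Function.update a i e) = 0 := fun i hi hai e he =>
      (ih _ (hm ▸ card_filter_update_val_eq_zero_lt hai he) (Function.update a i e)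
        (by rwa [Function.update_of_ne (ne_of_mem_erase hi).symm]) rfl).1 i
    have hsys : ∀ t < r, ∑ i ∈ Rᶜ, lam i ^ t * x i a
        + ∑ e ∈ univ.filter (fun e : Fin s => (e : ℕ) ≠ 0),
          mu e ^ t * x i₀ (Function.update a i₀ e) = 0 := by
      intro t ht
      have h := hx t ht a ha
      rwa [parityCheck_eq_of_val_eq_zero ha, ← sum_compl_add_sum R,
        sum_eq_zero (s := R) fun u hu => by rw [hR u hu a ha, mul_zero], add_zero,
        sum_eq_zero (s := univ.erase i₀) fun i hi => ?_, add_zero] at h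
      split_ifs with hai
      · exact sum_eq_zero fun e he => by rw [hnext i hi hai e (mem_filter.1 he).2, mul_zero]
      · rfl
    obtain ⟨hcompl, hfailed⟩ := eq_zero_of_sum_pow_mul_add_sum_pow_mul_eq_zero Rᶜ _
      hlam.injOn (fun e he e' he' => hmu e e' (by simpa using he) (by simpa using he'))
      (fun i _ e he => hlammu i e (mem_filter.1 he).2)
      (by have := card_filter_val_ne_zero_le s; omega) hsys
    refine ⟨fun i => ?_, fun e he => hfailed e (by simpa using he)⟩
    by_cases hi : i ∈ R
    · exact hR i hi a ha
    · exact hcompl i (mem_compl.2 hi)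
  refine ⟨fun a ha => (hslice a ha).1, fun a => ?_⟩
  by_cases ha : (a i₀ : ℕ) = 0
  · exact (hslice a ha).1 i₀
  · have h := (hslice (Function.update a i₀ ⟨0, by omega⟩) (by simp)).2 (a i₀) ha
    rwa [Function.update_idem, Function.update_eq_self] at h

end ParityCheck

theorem codeC.eq_zero_at_failed_nodes {F : Type*} [Field F] {n k d h r s : ℕ}
    (hnk : n = k + r) (hkd : k ≤ d) (hdn : d ≤ n) (hs : s = d - k + 1)
    {lam : Fin n → F} {mu : Fin s → F} (hlam : Function.Injective lam)
    (hmu : ∀ e e' : Fin s, (e : ℕ) ≠ 0 → (e' : ℕ) ≠ 0 → mu e = mu e' → e = e')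
    (hlammu : ∀ (i : Fin n) (e : Fin s), (e : ℕ) ≠ 0 → lam i ≠ mu e)
    {E : Fin n → ℕ → (Fin n → Fin s) → F} (hE : codeC n r s (d - k + h) lam mu E)
    {idx : Fin h → Fin n} {R : Finset (Fin n)} (hR : #R = d)
    (hD1 : ∀ j : Fin h, ∀ u ∈ R, ∀ a : Fin n → Fin s, (a (idx j) : ℕ) = 0 →
      E u (d - k + j + 1) a = 0)
    (hD2 : ∀ j : Fin h, ∀ u ∈ R, ∀ v : Fin s, (v : ℕ) ≠ 0 → ∀ a : Fin n → Fin s,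
      (a (idx j) : ℕ) = 0 → E u v a + E u (d - k + j + 1) (Function.update a (idx j) v) = 0)
    (j : Fin h) {b : ℕ} (hb : 1 ≤ b) (hbh : b ≤ d - k + h) (a : Fin n → Fin s) :
    E (idx j) b a = 0 := by
  have hcard : #Rᶜ + (s - 1) ≤ r := by
    rw [card_compl, Fintype.card_fin, hR]
    omega
  have hextra (j : Fin h) : (∀ a : Fin n → Fin s, (a (idx j) : ℕ) = 0 →
      ∀ i, E i (d - k + j + 1) a = 0) ∧ ∀ a, E (idx j) (d - k + j + 1) a = 0 :=
    eq_zero_of_parityCheck_eq_zero hlam hmu hlammu hcard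
      (fun t ht a _ => hE.parityCheck_eq_zero ht (by omega) (by omega) a) (hD1 j)
  have hpiggy (j : Fin h) (v : Fin s) (hv : (v : ℕ) ≠ 0) :
      let x := piggyback (fun i => E i v) (fun i => E i (d - k + j + 1)) (idx j) v
      (∀ a : Fin n → Fin s, (a (idx j) : ℕ) = 0 → ∀ i, x i a = 0) ∧ ∀ a, x (idx j) a = 0 :=
    eq_zero_of_parityCheck_eq_zero hlam hmu hlammu hcard
      (fun t ht a ha => by
        rw [parityCheck_piggyback t _ _ hv ha, hE.parityCheck_eq_zero ht (by omega) (by omega),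
          hE.parityCheck_eq_zero ht (by omega) (by omega), add_zero])
      (fun u hu a ha => by rw [piggyback, if_pos ha]; exact hD2 j u hu v hv a ha)
  have hdata (j : Fin h) (v : Fin s) (hv : (v : ℕ) ≠ 0) (a : Fin n → Fin s) :
      E (idx j) v a = 0 := by
    have h := (hpiggy j v hv).2 a
    simp only [piggyback] at h
    split_ifs at h
    · rwa [(hextra j).2, add_zero] at h
    · exact h
  by_cases hbdata : b ≤ d - k
  · exact hdata j ⟨b, by omega⟩ (by simp; omega) a
  obtain ⟨j', rfl⟩ : ∃ j' : Fin h, d - k + j' + 1 = b :=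
    ⟨⟨b - (d - k) - 1, by omega⟩, by simp only; omega⟩
  by_cases ha : (a (idx j') : ℕ) = 0
  · exact (hextra j').1 a ha (idx j)
  · have h := (hpiggy j' (a (idx j')) ha).1 (Function.update a (idx j') ⟨0, by omega⟩)
      (by simp) (idx j)
    simp only [piggyback] at h
    rwa [if_pos (by simp), Function.update_idem, Function.update_eq_self, hdata j _ ha,
      zero_add] at h

/-- Correctness of the full cooperative repair scheme: the failed nodes are
`idx 0, …, idx (h-1)` (pairwise distinct, `idx j` playing the role of
`i_{j+1}`), and `R` is a helper set of size `d` disjoint from them.  If two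
codewords of `C` agree, for every `j`, on all the data downloaded by node
`idx j` during the download phase, namely
`D_{1,j} = {c_{u,d-k+j+1,a} : u ∈ R, a ∈ V_{idx j}}` and
`D_{2,j} = {c_{u,b,a} + c_{u,d-k+j+1,a(idx j,b)} : u ∈ R, b ∈ [1,d-k], a ∈ V_{idx j}}`,
then they agree on the entire contents of all `h` failed nodes. -/
theorem cooperative_repair_scheme_correct
    {F : Type*} [Field F]
    (n k d h r s : ℕ)
    (hnk : n = k + r) (hkd : k < d) (hdn : d + h ≤ n)
    (hs : s = d - k + 1)
    (lam : Fin n → F) (mu : Fin s → F)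
    (hlam : Function.Injective lam)
    (hmu : ∀ e e' : Fin s, (e : ℕ) ≠ 0 → (e' : ℕ) ≠ 0 → mu e = mu e' → e = e')
    (hlammu : ∀ (i : Fin n) (e : Fin s), (e : ℕ) ≠ 0 → lam i ≠ mu e)
    (c c' : Fin n → ℕ → (Fin n → Fin s) → F)
    (hc : codeC n r s (d - k + h) lam mu c) (hc' : codeC n r s (d - k + h) lam mu c')
    (idx : Fin h → Fin n)
    (R : Finset (Fin n)) (hR : R.card = d)
    (hD1 : ∀ j : Fin h, ∀ u ∈ R, ∀ a : Fin n → Fin s, (a (idx j) : ℕ) = 0 →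
      c u (d - k + (j : ℕ) + 1) a = c' u (d - k + (j : ℕ) + 1) a)
    (hD2 : ∀ j : Fin h, ∀ u ∈ R, ∀ (b : ℕ) (hb : 1 ≤ b) (hb' : b ≤ d - k),
      ∀ a : Fin n → Fin s, (a (idx j) : ℕ) = 0 →
        c u b a + c u (d - k + (j : ℕ) + 1) (Function.update a (idx j) ⟨b, by omega⟩)
          = c' u b a
            + c' u (d - k + (j : ℕ) + 1) (Function.update a (idx j) ⟨b, by omega⟩)) :
    ∀ j : Fin h, ∀ (b : ℕ), 1 ≤ b → b ≤ d - k + h → ∀ a : Fin n → Fin s,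
      c (idx j) b a = c' (idx j) b a := by
  intro j b hb hbh a
  have hdiff := (hc.sub hc').eq_zero_at_failed_nodes hnk hkd.le (by omega) hs hlam hmu hlammu hR
    (fun j u hu a ha => sub_eq_zero.2 (hD1 j u hu a ha))
    (fun j u hu v hv a ha => by
      have hD := hD2 j u hu v (by omega) (by omega) a ha
      simp only [Fin.eta] at hD
      simp only [Pi.sub_apply]
      linear_combination hD)
    j hb hbh a
  exact sub_eq_zero.1 hdiff
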